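/- Let (A,C)_ψ be an entwining structure. With W, Z, X defined as W(a⊗b) = s·ba⊗1 + r·1⊗ba − s·b⊗a, Z(c⊗d) = t·ε(c)Δ(d) + p·ε(d)Δ(c) − p·d⊗c, X = ψ∘τ, one has [X,X,Z] = 0, i.e., X₁₂∘X₁₃∘Z₂₃ = Z₂₃∘X₁₃∘X₁₂ on A⊗C⊗C. -/
import Mathlib


open TensorProduct LinearMap


/-- `ψ : C ⊗ A → A ⊗ C` is an entwining map, i.e. `(A, C)_ψ` is an entwining structure:
(1) `ψ∘(id_C⊗μ) = (μ⊗id_C)∘(id_A⊗ψ)∘(ψ⊗id_A)`;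
(2) `(id_A⊗Δ)∘ψ = (ψ⊗id_C)∘(id_C⊗ψ)∘(Δ⊗id_A)`;
(3) `ψ(c⊗1) = 1⊗c`; (4) `(id_A⊗ε)∘ψ = ε⊗id_A`. -/
def IsEntwining (k : Type*) {A C : Type*} [Field k] [Ring A] [Algebra k A]
    [AddCommGroup C] [Module k C] [Coalgebra k C]
    (ψ : C ⊗[k] A →ₗ[k] A ⊗[k] C) : Prop :=
  (∀ (c : C) (a b : A),
    ψ (c ⊗ₜ[k] (a * b)) =
      (LinearMap.mul' k A).rTensor C
        ((TensorProduct.assoc k A A C).symm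
          (ψ.lTensor A ((TensorProduct.assoc k A C A)
            (ψ.rTensor A ((c ⊗ₜ[k] a) ⊗ₜ[k] b)))))) ∧
  (∀ (c : C) (a : A),
    (Coalgebra.comul (R := k) (A := C)).lTensor A (ψ (c ⊗ₜ[k] a)) =
      (TensorProduct.assoc k A C C)
        (ψ.rTensor C ((TensorProduct.assoc k C A C).symm
          (ψ.lTensor C ((TensorProduct.assoc k C C A)
            ((Coalgebra.comul (R := k) (A := C)).rTensor A (c ⊗ₜ[k] a))))))) ∧
  (∀ c : C, ψ (c ⊗ₜ[k] (1 : A)) = (1 : A) ⊗ₜ[k] c) ∧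
  (∀ (c : C) (a : A),
    (Coalgebra.counit (R := k) (A := C)).lTensor A (ψ (c ⊗ₜ[k] a)) =
      a ⊗ₜ[k] Coalgebra.counit (R := k) c)

/-- For an entwining structure `(A,C)_ψ`, with
`W(a⊗b) = s·ba⊗1 + r·1⊗ba − s·b⊗a`, `Z(c⊗d) = t·ε(c)Δ(d) + p·ε(d)Δ(c) − p·d⊗c` and
`X = ψ∘τ`, one has `[X,X,Z] = 0`, i.e. `X₁₂∘X₁₃∘Z₂₃ = Z₂₃∘X₁₃∘X₁₂` on `A⊗C⊗C`. -/
theorem stmt6 (k A C : Type*) [Field k] [Ring A] [Algebra k A]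
    [AddCommGroup C] [Module k C] [Coalgebra k C]
    (r s t p : k)
    (ψ : C ⊗[k] A →ₗ[k] A ⊗[k] C) (hψ : IsEntwining k ψ)
    (W : A ⊗[k] A →ₗ[k] A ⊗[k] A)
    (hW : ∀ a b : A, W (a ⊗ₜ[k] b) =
      s • ((b * a) ⊗ₜ[k] (1 : A)) + r • ((1 : A) ⊗ₜ[k] (b * a)) - s • (b ⊗ₜ[k] a))
    (Z : C ⊗[k] C →ₗ[k] C ⊗[k] C)
    (hZ : ∀ c d : C, Z (c ⊗ₜ[k] d) =
      (t * Coalgebra.counit (R := k) c) • Coalgebra.comul (R := k) d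
      + (p * Coalgebra.counit (R := k) d) • Coalgebra.comul (R := k) c
      - p • (d ⊗ₜ[k] c))
    (X : A ⊗[k] C →ₗ[k] A ⊗[k] C)
    (hX : X = ψ ∘ₗ (TensorProduct.comm k A C).toLinearMap)
    (X12 X13 : A ⊗[k] (C ⊗[k] C) →ₗ[k] A ⊗[k] (C ⊗[k] C))
    -- `X12` acts as `X` on the first two tensor factors:
    (hX12 : ∀ (a : A) (c d : C), X12 (a ⊗ₜ[k] (c ⊗ₜ[k] d)) =
      ((TensorProduct.mk k C C).flip d).lTensor A (X (a ⊗ₜ[k] c)))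
    -- `X13` acts as `X` on the first and third tensor factors:
    (hX13 : ∀ (a : A) (c d : C), X13 (a ⊗ₜ[k] (c ⊗ₜ[k] d)) =
      (TensorProduct.mk k C C c).lTensor A (X (a ⊗ₜ[k] d))) :
    X12 ∘ₗ X13 ∘ₗ Z.lTensor A = Z.lTensor A ∘ₗ X13 ∘ₗ X12 := by

  obtain ⟨-, h2, -, h4⟩ := hψ
  -- `haux`: reassociating `v ⊗ₜ c'` for `v : A ⊗ C`
  have haux : ∀ (v : A ⊗[k] C) (c' : C),
      (TensorProduct.assoc k A C C) (v ⊗ₜ[k] c')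
        = (((TensorProduct.mk k C C).flip c').lTensor A) v := by
    intro v c'
    induction v using TensorProduct.induction_on with
    | zero => simp
    | tmul a' c => simp
    | add x y hx hy => simp [add_tmul, hx, hy]
  -- `hκ`: the counit identity (axiom 4), in scalar form
  have hκ : ∀ (c0 : C) (a0 : A),
      (TensorProduct.rid k A)
        ((Coalgebra.counit (R := k) (A := C)).lTensor A (ψ (c0 ⊗ₜ[k] a0)))
        = Coalgebra.counit (R := k) c0 • a0 := by
    intro c0 a0
    rw [h4]
    simp
  -- `hG`: action of `X12` on `(mk d').lTensor A u`
  have hG : ∀ (d' : C) (u : A ⊗[k] C),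
      X12 (((TensorProduct.mk k C C d').lTensor A) u)
        = (TensorProduct.assoc k A C C)
            (ψ.rTensor C ((TensorProduct.assoc k C A C).symm (d' ⊗ₜ[k] u))) := by
    intro d' u
    induction u using TensorProduct.induction_on with
    | zero => simp
    | tmul a' c' =>
      rw [lTensor_tmul, TensorProduct.mk_apply, hX12, hX]
      simp only [LinearMap.comp_apply, LinearEquiv.coe_coe, TensorProduct.comm_tmul,
        TensorProduct.assoc_symm_tmul, rTensor_tmul, haux]
    | add x y hx hy => simp [tmul_add, hx, hy]
  -- `hF`: `X12 ∘ X13` on `a' ⊗ₜ y` as the "double entwine"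
  have hF : ∀ (a' : A) (y : C ⊗[k] C),
      X12 (X13 (a' ⊗ₜ[k] y))
        = (TensorProduct.assoc k A C C)
            (ψ.rTensor C ((TensorProduct.assoc k C A C).symm
              (ψ.lTensor C ((TensorProduct.assoc k C C A) (y ⊗ₜ[k] a'))))) := by
    intro a' y
    induction y using TensorProduct.induction_on with
    | zero => simp
    | tmul c1 c2 =>
      rw [hX13, hX]
      simp only [LinearMap.comp_apply, LinearEquiv.coe_coe, TensorProduct.comm_tmul]
      rw [hG]
      simp only [TensorProduct.assoc_tmul, lTensor_tmul]
    | add x y hx hy => simp [tmul_add, add_tmul, hx, hy]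
  -- `hZL`: `Z₂₃` after inserting `c'` in the middle slot
  have hZL : ∀ (c' : C) (v : A ⊗[k] C),
      (Z.lTensor A) (((TensorProduct.mk k C C c').lTensor A) v)
        = (t * Coalgebra.counit (R := k) c') •
            ((Coalgebra.comul (R := k) (A := C)).lTensor A v)
          + p • ((TensorProduct.rid k A)
                ((Coalgebra.counit (R := k) (A := C)).lTensor A v)
                ⊗ₜ[k] Coalgebra.comul (R := k) c')
          - p • ((((TensorProduct.mk k C C).flip c').lTensor A) v) := by
    intro c' v
    induction v using TensorProduct.induction_on with
    | zero => simp
    | tmul b d' =>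
      simp only [lTensor_tmul, TensorProduct.mk_apply, hZ, LinearMap.flip_apply,
        TensorProduct.rid_tmul]
      rw [TensorProduct.tmul_sub, TensorProduct.tmul_add]
      simp only [TensorProduct.tmul_smul, TensorProduct.smul_tmul', smul_smul]
      have h3 : ((p • d') ⊗ₜ[k] c' : C ⊗[k] C) = p • (d' ⊗ₜ[k] c') :=
        (TensorProduct.smul_tmul' p d' c').symm
      rw [h3, TensorProduct.tmul_smul, TensorProduct.smul_tmul']
    | add x y hx hy =>
      simp only [map_add, hx, hy, TensorProduct.add_tmul, smul_add]
      abel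
  -- `hR`: the right-hand side `Z₂₃ ∘ X13` applied after `X12`'s output
  have hR : ∀ (d : C) (u : A ⊗[k] C),
      (Z.lTensor A) (X13 ((((TensorProduct.mk k C C).flip d).lTensor A) u))
        = t • ((Coalgebra.comul (R := k) (A := C)).lTensor A
              (ψ (d ⊗ₜ[k] ((TensorProduct.rid k A)
                ((Coalgebra.counit (R := k) (A := C)).lTensor A u)))))
          + (p * Coalgebra.counit (R := k) d) •
              ((Coalgebra.comul (R := k) (A := C)).lTensor A u)
          - p • ((TensorProduct.assoc k A C C)
              (ψ.rTensor C ((TensorProduct.assoc k C A C).symm (d ⊗ₜ[k] u)))) := by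
    intro d u
    induction u using TensorProduct.induction_on with
    | zero => simp
    | tmul a' c' =>
      rw [lTensor_tmul, LinearMap.flip_apply, TensorProduct.mk_apply, hX13, hX]
      simp only [LinearMap.comp_apply, LinearEquiv.coe_coe, TensorProduct.comm_tmul]
      rw [hZL c' (ψ (d ⊗ₜ[k] a'))]
      rw [hκ d a']
      simp only [lTensor_tmul, TensorProduct.rid_tmul, TensorProduct.tmul_smul,
        map_smul, smul_smul, TensorProduct.assoc_symm_tmul, rTensor_tmul, haux,
        TensorProduct.smul_tmul']
      rw [show ((Coalgebra.counit (R := k) c' • d) ⊗ₜ[k] a' : C ⊗[k] A)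
          = Coalgebra.counit (R := k) c' • (d ⊗ₜ[k] a')
          from (TensorProduct.smul_tmul' _ _ _).symm,
        map_smul, map_smul, smul_smul]
    | add x y hx hy =>
      simp only [map_add, tmul_add, hx, hy, smul_add]
      abel
  -- Main proof
  apply TensorProduct.ext'
  intro a y
  simp only [LinearMap.comp_apply, lTensor_tmul]
  induction y using TensorProduct.induction_on with
  | zero => simp
  | tmul c d =>
    -- left-hand side
    rw [hZ]
    rw [TensorProduct.tmul_sub, TensorProduct.tmul_add]
    simp only [TensorProduct.tmul_smul, map_add, map_sub, map_smul]
    rw [hF a (Coalgebra.comul (R := k) d), hF a (Coalgebra.comul (R := k) c),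
      hF a (d ⊗ₜ[k] c)]
    -- right-hand side
    rw [hX12, hX]
    simp only [LinearMap.comp_apply, LinearEquiv.coe_coe, TensorProduct.comm_tmul]
    rw [hR d (ψ (c ⊗ₜ[k] a)), hκ c a]
    rw [TensorProduct.tmul_smul, map_smul, map_smul, smul_smul]
    rw [h2 d a, h2 c a]
    simp only [rTensor_tmul, TensorProduct.assoc_tmul, lTensor_tmul]
  | add x y hx hy =>
    simp only [map_add, tmul_add, hx, hy]
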